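/- Let v be an even-weight codeword of a binary linear code C that is not a zero neighbor in C. Then v is a zero neighbor in the even weight subcode C_even if and only if v is only-odd-decomposable in C. -/

import Mathlib

open Finset

/-- Support of a binary vector: the set of nonzero coordinates. -/
def supp {n : ℕ} (v : Fin n → ZMod 2) : Finset (Fin n) :=
  Finset.univ.filter fun i => v i ≠ 0

/-- Hamming weight. -/
def wt {n : ℕ} (v : Fin n → ZMod 2) : ℕ := (supp v).card

/-- A nonzero codeword of `D` is a zero neighbor (minimal codeword) if no nonzero
codeword of `D` has support strictly contained in its support. -/
def IsZeroNeighbor {n : ℕ} (D : Set (Fin n → ZMod 2)) (v : Fin n → ZMod 2) : Prop :=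
  v ∈ D ∧ v ≠ 0 ∧ ∀ v' ∈ D, v' ≠ 0 → ¬ supp v' ⊂ supp v

/-- `v` is decomposable in `D` if it is the sum of two nonzero codewords of `D`
with disjoint supports. -/
def Decomposable {n : ℕ} (D : Set (Fin n → ZMod 2)) (v : Fin n → ZMod 2) : Prop :=
  ∃ v1 v2, v1 ∈ D ∧ v2 ∈ D ∧ v1 ≠ 0 ∧ v2 ≠ 0 ∧
    Disjoint (supp v1) (supp v2) ∧ v = v1 + v2

/-- Extension of a vector by its overall parity bit. -/
def extVec {n : ℕ} (v : Fin n → ZMod 2) : Fin (n + 1) → ZMod 2 :=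
  Fin.snoc v (∑ i, v i)

/-- The extended code. -/
def extCode {n : ℕ} (C : Submodule (ZMod 2) (Fin n → ZMod 2)) :
    Set (Fin (n + 1) → ZMod 2) :=
  extVec '' (C : Set (Fin n → ZMod 2))

/-- An even-weight codeword is only-odd-decomposable if it is decomposable and in every
decomposition into nonzero disjoint-support codewords both parts have odd weight. -/
def OnlyOddDecomposable {n : ℕ} (C : Submodule (ZMod 2) (Fin n → ZMod 2))
    (v : Fin n → ZMod 2) : Prop :=
  Even (wt v) ∧ Decomposable (C : Set (Fin n → ZMod 2)) v ∧
    ∀ v1 v2, v1 ∈ C → v2 ∈ C → v1 ≠ 0 → v2 ≠ 0 →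
      Disjoint (supp v1) (supp v2) → v = v1 + v2 → Odd (wt v1) ∧ Odd (wt v2)

/-- `L_w(D)`: the number of zero neighbors of weight `w` in `D`. -/
noncomputable def Lw {n : ℕ} (D : Set (Fin n → ZMod 2)) (w : ℕ) : ℕ :=
  {v : Fin n → ZMod 2 | IsZeroNeighbor D v ∧ wt v = w}.ncard

/-- `N_w(C)`: the number of only-odd-decomposable codewords of weight `w` in `C`. -/
noncomputable def Nw {n : ℕ} (C : Submodule (ZMod 2) (Fin n → ZMod 2)) (w : ℕ) : ℕ :=
  {v : Fin n → ZMod 2 | v ∈ C ∧ OnlyOddDecomposable C v ∧ wt v = w}.ncard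

/-- Action of a coordinate permutation on a vector. -/
def permVec {n : ℕ} (π : Equiv.Perm (Fin n)) (v : Fin n → ZMod 2) : Fin n → ZMod 2 :=
  v ∘ π.symm

/-- `π` is an automorphism of the code `D`. -/
def IsAut {n : ℕ} (D : Set (Fin n → ZMod 2)) (π : Equiv.Perm (Fin n)) : Prop :=
  permVec π '' D = D

/-- The even weight subcode of `C`, as a set. -/
def evenSub {n : ℕ} (C : Submodule (ZMod 2) (Fin n → ZMod 2)) :
    Set (Fin n → ZMod 2) :=
  {v : Fin n → ZMod 2 | v ∈ C ∧ Even (wt v)}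

/-! A nonzero codeword `w` with `supp w ⊊ supp v` is exactly the first part of a decomposition
`v = w + (v - w)`. So minimality of `v` in `C_even` says that no decomposition has an even part,
while non-minimality of `v` in `C` provides a decomposition in the first place. -/

section

variable {n : ℕ}

@[simp]
lemma mem_supp {v : Fin n → ZMod 2} {i : Fin n} : i ∈ supp v ↔ v i ≠ 0 := by
  simp [supp]

lemma supp_nonempty_iff {v : Fin n → ZMod 2} : (supp v).Nonempty ↔ v ≠ 0 := by
  simp [Finset.Nonempty, funext_iff]

lemma supp_add_of_disjoint {a b : Fin n → ZMod 2} (h : Disjoint (supp a) (supp b)) :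
    supp (a + b) = supp a ∪ supp b := by
  ext i
  have hi : ¬(a i ≠ 0 ∧ b i ≠ 0) := fun hab =>
    disjoint_left.mp h (mem_supp.2 hab.1) (mem_supp.2 hab.2)
  revert hi
  simp only [mem_supp, mem_union, Pi.add_apply]
  generalize a i = x; generalize b i = y
  revert x y; decide

lemma supp_sub_of_subset {v w : Fin n → ZMod 2} (h : supp w ⊆ supp v) :
    supp (v - w) = supp v \ supp w := by
  ext i
  have hi : w i ≠ 0 → v i ≠ 0 := fun hw => mem_supp.1 (h (mem_supp.2 hw))
  revert hi
  simp only [mem_supp, mem_sdiff, Pi.sub_apply]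
  generalize v i = x; generalize w i = y
  revert x y; decide

lemma supp_ssubset_of_eq_add {v a b : Fin n → ZMod 2} (hb : b ≠ 0)
    (h : Disjoint (supp a) (supp b)) (hv : v = a + b) : supp a ⊂ supp v := by
  obtain ⟨i, hi⟩ := supp_nonempty_iff.2 hb
  rw [hv, supp_add_of_disjoint h, ssubset_iff_of_subset subset_union_left]
  exact ⟨i, mem_union_right _ hi, disjoint_right.mp h hi⟩

lemma Decomposable.ne_zero {D : Set (Fin n → ZMod 2)} {v : Fin n → ZMod 2}
    (h : Decomposable D v) : v ≠ 0 := by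
  obtain ⟨v1, v2, -, -, h1, h2, hd, hv⟩ := h
  exact supp_nonempty_iff.1 ((supp_nonempty_iff.2 h1).mono
    (supp_ssubset_of_eq_add h2 hd hv).subset)

lemma Decomposable.mem {C : Submodule (ZMod 2) (Fin n → ZMod 2)} {v : Fin n → ZMod 2}
    (h : Decomposable (C : Set (Fin n → ZMod 2)) v) : v ∈ C := by
  obtain ⟨v1, v2, h1, h2, -, -, -, rfl⟩ := h
  exact C.add_mem h1 h2

lemma exists_eq_add_of_supp_ssubset {C : Submodule (ZMod 2) (Fin n → ZMod 2)}
    {v w : Fin n → ZMod 2} (hv : v ∈ C) (hw : w ∈ C) (hss : supp w ⊂ supp v) :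
    ∃ w' ∈ C, w' ≠ 0 ∧ Disjoint (supp w) (supp w') ∧ v = w + w' := by
  have hsupp := supp_sub_of_subset hss.subset
  refine ⟨v - w, C.sub_mem hv hw, ?_, ?_, (add_sub_cancel w v).symm⟩
  · rw [← supp_nonempty_iff, hsupp, sdiff_nonempty]
    exact hss.not_subset
  · rw [hsupp]
    exact disjoint_sdiff

lemma decomposable_of_not_isZeroNeighbor {C : Submodule (ZMod 2) (Fin n → ZMod 2)}
    {v : Fin n → ZMod 2} (hv : v ∈ C) (hv0 : v ≠ 0)
    (h : ¬ IsZeroNeighbor (C : Set (Fin n → ZMod 2)) v) :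
    Decomposable (C : Set (Fin n → ZMod 2)) v := by
  simp only [IsZeroNeighbor, not_and, not_forall, not_not] at h
  obtain ⟨w, hw, hw0, hss⟩ := h hv hv0
  obtain ⟨w', hw', hw'0, hd, hvw⟩ := exists_eq_add_of_supp_ssubset hv hw hss
  exact ⟨w, w', hw, hw', hw0, hw'0, hd, hvw⟩

lemma IsZeroNeighbor.notMem_of_eq_add {D : Set (Fin n → ZMod 2)} {v a b : Fin n → ZMod 2}
    (h : IsZeroNeighbor D v) (ha : a ≠ 0) (hb : b ≠ 0) (hd : Disjoint (supp a) (supp b))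
    (hv : v = a + b) : a ∉ D :=
  fun haD => h.2.2 a haD ha (supp_ssubset_of_eq_add hb hd hv)

lemma odd_wt_of_notMem_evenSub {C : Submodule (ZMod 2) (Fin n → ZMod 2)} {v : Fin n → ZMod 2}
    (hv : v ∈ C) (h : v ∉ evenSub C) : Odd (wt v) :=
  Nat.not_even_iff_odd.1 fun heven => h ⟨hv, heven⟩

end

theorem even_subcode_zero_neighbor_iff_general {n : ℕ}
    (C : Submodule (ZMod 2) (Fin n → ZMod 2)) (v : Fin n → ZMod 2)
    (hnzn : ¬ IsZeroNeighbor (C : Set (Fin n → ZMod 2)) v) :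
    IsZeroNeighbor (evenSub C) v ↔ OnlyOddDecomposable C v := by
  constructor
  · intro hmin
    have ⟨⟨hv, heven⟩, hv0, _⟩ := hmin
    refine ⟨heven, decomposable_of_not_isZeroNeighbor hv hv0 hnzn, ?_⟩
    intro v1 v2 h1 h2 h10 h20 hd hs
    exact ⟨odd_wt_of_notMem_evenSub h1 (hmin.notMem_of_eq_add h10 h20 hd hs),
      odd_wt_of_notMem_evenSub h2
        (hmin.notMem_of_eq_add h20 h10 hd.symm (hs.trans (add_comm v1 v2)))⟩
  · rintro ⟨heven, hdec, hodd⟩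
    refine ⟨⟨hdec.mem, heven⟩, hdec.ne_zero, ?_⟩
    rintro u ⟨hu, hueven⟩ hu0 hss
    obtain ⟨u', hu', hu'0, hd, hvu⟩ := exists_eq_add_of_supp_ssubset hdec.mem hu hss
    exact Nat.not_odd_iff_even.2 hueven (hodd u u' hu hu' hu0 hu'0 hd hvu).1

theorem even_subcode_zero_neighbor_iff {n : ℕ}
    (C : Submodule (ZMod 2) (Fin n → ZMod 2)) (v : Fin n → ZMod 2)
    (hv : v ∈ C) (heven : Even (wt v))
    (hnzn : ¬ IsZeroNeighbor (C : Set (Fin n → ZMod 2)) v) :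
    IsZeroNeighbor (evenSub C) v ↔ OnlyOddDecomposable C v :=
  even_subcode_zero_neighbor_iff_general C v hnzn
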